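/- Let d ≥ 2 be squarefree, ε > 1 the fundamental unit of O_K for K = ℚ(√d), and let ε' be the smallest positive power of ε lying in ℤ[√d], written ε' = X + Y√d with X, Y ∈ ℕ. Then ε' ∈ {ε, ε³}. -/
import Mathlib


/-- The ring of integers of `ℚ(√d)`, viewed as a subset of `ℝ`. -/
def ringOfInts (d : ℕ) : Set ℝ :=
  if d % 4 = 1 then {α | ∃ x y : ℤ, α = x + y * ((1 + Real.sqrt d) / 2)}
  else {α | ∃ x y : ℤ, α = x + y * Real.sqrt d}

/-- `ℤ[√d]`, viewed as a subset of `ℝ`. -/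
def zSqrtd (d : ℕ) : Set ℝ :=
  {α | ∃ X Y : ℤ, α = X + Y * Real.sqrt d}

/-- `α` is a unit of the subring (given as a subset of `ℝ`) `S`. -/
def IsUnitIn (S : Set ℝ) (α : ℝ) : Prop :=
  α ∈ S ∧ ∃ β ∈ S, α * β = 1

/-- `ε` is the fundamental unit (`> 1`) of `O_K`. -/
def IsFundUnit (d : ℕ) (ε : ℝ) : Prop :=
  IsUnitIn (ringOfInts d) ε ∧ 1 < ε ∧
    ∀ η : ℝ, IsUnitIn (ringOfInts d) η → 1 < η → ε ≤ η

lemma irr_sqrt_aux {d : ℕ} (hd : 2 ≤ d) (hsf : Squarefree d) :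
    Irrational (Real.sqrt d) := by
  rw [irrational_sqrt_natCast_iff]
  rintro ⟨m, hm⟩
  have h1 : m = 1 := Nat.isUnit_iff.mp (hsf m (hm ▸ dvd_refl _))
  rw [h1] at hm
  omega

lemma repr_unique {d : ℕ} (hirr : Irrational (Real.sqrt d)) {p q r s : ℤ}
    (h : (p : ℝ) + (q : ℝ) * Real.sqrt d = (r : ℝ) + (s : ℝ) * Real.sqrt d) :
    p = r ∧ q = s := by
  by_cases hqs : q = s
  · subst hqs
    refine ⟨?_, rfl⟩
    have : (p : ℝ) = r := by linarith
    exact_mod_cast this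
  · exfalso
    have hne : ((s - q : ℤ) : ℝ) ≠ 0 :=
      Int.cast_ne_zero.mpr (sub_ne_zero.mpr (Ne.symm hqs))
    have hs : Real.sqrt d = ((p - r : ℤ) : ℝ) / ((s - q : ℤ) : ℝ) := by
      rw [eq_div_iff hne]
      push_cast
      linear_combination -h
    apply hirr
    refine ⟨((p - r : ℤ) : ℚ) / ((s - q : ℤ) : ℚ), ?_⟩
    rw [hs]
    push_cast
    ring

/-- The smallest positive power `ε' = ε^k` of `ε` lying in `ℤ[√d]` is
`ε` or `ε³`. -/
theorem eps_prime_eq_eps_or_eps_cubed (d : ℕ) (hd : 2 ≤ d)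
    (hsf : Squarefree d) (ε : ℝ) (hε : IsFundUnit d ε)
    (k : ℕ) (hk : 0 < k) (hmem : ε ^ k ∈ zSqrtd d)
    (hmin : ∀ j : ℕ, 0 < j → ε ^ j ∈ zSqrtd d → k ≤ j) :
    ε ^ k = ε ∨ ε ^ k = ε ^ 3 := by
  have hirr : Irrational (Real.sqrt d) := irr_sqrt_aux hd hsf
  have hd0 : (0 : ℝ) ≤ (d : ℝ) := by positivity
  have hsq : Real.sqrt d ^ 2 = (d : ℝ) := Real.sq_sqrt hd0
  obtain ⟨⟨hεmem, β, hβmem, hβ⟩, hε1, -⟩ := hε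
  by_cases hd4 : d % 4 = 1
  swap
  · -- 2,3 mod 4 : O_K = ℤ[√d], so k = 1
    rw [ringOfInts, if_neg hd4] at hεmem
    have h1 : ε ^ 1 ∈ zSqrtd d := by
      rw [pow_one]; exact hεmem
    have hk1 : k = 1 := le_antisymm (hmin 1 one_pos h1) hk
    subst hk1
    exact Or.inl (pow_one ε)
  · rw [ringOfInts, if_pos hd4] at hεmem hβmem
    obtain ⟨x, y, hxy⟩ := hεmem
    obtain ⟨u, v, huv⟩ := hβmem
    set a : ℤ := 2 * x + y with ha
    set c : ℤ := 2 * u + v with hc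
    have heq : ε = ((a : ℝ) + (y : ℝ) * Real.sqrt d) / 2 := by
      rw [hxy, ha]; push_cast; ring
    have hbeq : β = ((c : ℝ) + (v : ℝ) * Real.sqrt d) / 2 := by
      rw [huv, hc]; push_cast; ring
    rw [heq, hbeq] at hβ
    -- the product relation: (ac + yvd) + (av + yc)√d = 4
    have h4 : ((a * c + y * v * (d : ℤ) : ℤ) : ℝ)
        + ((a * v + y * c : ℤ) : ℝ) * Real.sqrt d
        = ((4 : ℤ) : ℝ) + ((0 : ℤ) : ℝ) * Real.sqrt d := by
      push_cast
      linear_combination 4 * hβ - (y : ℝ) * (v : ℝ) * hsq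
    obtain ⟨h41, h42⟩ := repr_unique hirr h4
    rcases Int.even_or_odd y with hye | hyo
    · -- y even : ε itself lies in ℤ[√d], so k = 1
      obtain ⟨B, hB⟩ := hye
      have h1 : ε ^ 1 ∈ zSqrtd d := by
        rw [pow_one]
        exact ⟨x + B, B, by rw [hxy, hB]; push_cast; ring⟩
      have hk1 : k = 1 := le_antisymm (hmin 1 one_pos h1) hk
      subst hk1
      exact Or.inl (pow_one ε)
    · -- y odd : then a odd, d ≡ 5 (mod 8), and k = 3
      obtain ⟨B, hB⟩ := hyo
      have hao : a = 2 * (x + B) + 1 := by omega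
      set A : ℤ := x + B with hA
      -- first : d % 8 = 5
      have hd8 : d % 8 = 5 := by
        rcases (by omega : d % 8 = 1 ∨ d % 8 = 5) with h1 | h5
        · exfalso
          have hdz : ((d : ℕ) : ZMod 8) = 1 := by
            rw [← ZMod.natCast_mod, h1]; rfl
          have hN : (8 : ℤ) ∣ a ^ 2 - (d : ℤ) * y ^ 2 := by
            have key : ∀ X Y : ZMod 8,
                (2 * X + 1) ^ 2 - 1 * (2 * Y + 1) ^ 2 = 0 := by decide
            apply (ZMod.intCast_zmod_eq_zero_iff_dvd _ 8).mp
            rw [hao, hB]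
            push_cast
            rw [hdz]
            linear_combination key (A : ZMod 8) (B : ZMod 8)
          have hNM : (a ^ 2 - (d : ℤ) * y ^ 2) * (c ^ 2 - (d : ℤ) * v ^ 2)
              = 16 := by
            have hid : (a ^ 2 - (d : ℤ) * y ^ 2) * (c ^ 2 - (d : ℤ) * v ^ 2)
                = (a * c + y * v * (d : ℤ)) ^ 2
                  - (d : ℤ) * (a * v + y * c) ^ 2 := by ring
            rw [hid, h41, h42]; ring
          obtain ⟨N, hN'⟩ := hN
          have h8 : (8 : ℤ) * (N * (c ^ 2 - (d : ℤ) * v ^ 2)) = 16 := by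
            rw [← mul_assoc, ← hN']; linarith [hNM]
          have hM2 : (c ^ 2 - (d : ℤ) * v ^ 2) ∣ 2 :=
            ⟨N, by linarith [mul_comm N (c ^ 2 - (d : ℤ) * v ^ 2)]⟩
          rcases Int.even_or_odd v with hve | hvo
          · obtain ⟨E, hE⟩ := hve
            have hc2 : c = 2 * (u + E) := by omega
            have h4d : (4 : ℤ) ∣ c ^ 2 - (d : ℤ) * v ^ 2 :=
              ⟨(u + E) ^ 2 - (d : ℤ) * E ^ 2, by
                rw [hc2, (show v = 2 * E by omega)]; ring⟩
            have := h4d.trans hM2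
            norm_num at this
          · obtain ⟨E, hE⟩ := hvo
            have hc2 : c = 2 * (u + E) + 1 := by omega
            have h8d : (8 : ℤ) ∣ c ^ 2 - (d : ℤ) * v ^ 2 := by
              have key : ∀ X Y : ZMod 8,
                  (2 * X + 1) ^ 2 - 1 * (2 * Y + 1) ^ 2 = 0 := by decide
              apply (ZMod.intCast_zmod_eq_zero_iff_dvd _ 8).mp
              rw [hc2, hE]
              push_cast
              rw [hdz]
              linear_combination key (((u : ℤ) : ZMod 8) + ((E : ℤ) : ZMod 8)) ((E : ℤ) : ZMod 8)
            have := h8d.trans hM2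
            norm_num at this
        · exact h5
      -- ε³ ∈ ℤ[√d]
      have hdz : ((d : ℕ) : ZMod 8) = 5 := by
        rw [← ZMod.natCast_mod, hd8]; rfl
      obtain ⟨P, hP⟩ : (8 : ℤ) ∣ a ^ 3 + 3 * a * y ^ 2 * (d : ℤ) := by
        have key : ∀ X Y : ZMod 8,
            (2 * X + 1) ^ 3 + 3 * (2 * X + 1) * (2 * Y + 1) ^ 2 * 5 = 0 := by
          decide
        apply (ZMod.intCast_zmod_eq_zero_iff_dvd _ 8).mp
        rw [hao, hB]
        push_cast
        rw [hdz]
        linear_combination key (A : ZMod 8) (B : ZMod 8)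
      obtain ⟨Q, hQ⟩ : (8 : ℤ) ∣ 3 * a ^ 2 * y + y ^ 3 * (d : ℤ) := by
        have key : ∀ X Y : ZMod 8,
            3 * (2 * X + 1) ^ 2 * (2 * Y + 1) + (2 * Y + 1) ^ 3 * 5 = 0 := by
          decide
        apply (ZMod.intCast_zmod_eq_zero_iff_dvd _ 8).mp
        rw [hao, hB]
        push_cast
        rw [hdz]
        linear_combination key (A : ZMod 8) (B : ZMod 8)
      have hPr : (a : ℝ) ^ 3 + 3 * (a : ℝ) * (y : ℝ) ^ 2 * (d : ℝ)
          = 8 * (P : ℝ) := by exact_mod_cast congrArg (Int.cast : ℤ → ℝ) hP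
      have hQr : 3 * (a : ℝ) ^ 2 * (y : ℝ) + (y : ℝ) ^ 3 * (d : ℝ)
          = 8 * (Q : ℝ) := by exact_mod_cast congrArg (Int.cast : ℤ → ℝ) hQ
      have he3 : ε ^ 3 = (P : ℝ) + (Q : ℝ) * Real.sqrt d := by
        rw [heq]
        linear_combination hPr / 8 + (Real.sqrt d / 8) * hQr
          + ((3 * (a : ℝ) * (y : ℝ) ^ 2) / 8
            + ((y : ℝ) ^ 3 * Real.sqrt d) / 8) * hsq
      have hk3 : k ≤ 3 := hmin 3 (by norm_num) ⟨P, Q, he3⟩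
      rcases (by omega : k = 1 ∨ k = 2 ∨ k = 3) with h1 | h2 | h3
      · -- k = 1 impossible : y odd
        exfalso
        subst h1
        obtain ⟨X, Y, hXY⟩ := hmem
        rw [pow_one, heq] at hXY
        have hrel : ((a : ℤ) : ℝ) + ((y : ℤ) : ℝ) * Real.sqrt d
            = ((2 * X : ℤ) : ℝ) + ((2 * Y : ℤ) : ℝ) * Real.sqrt d := by
          push_cast
          linear_combination 2 * hXY
        have := (repr_unique hirr hrel).2
        omega
      · -- k = 2 impossible : 2ay would be divisible by 4
        exfalso
        subst h2
        obtain ⟨X, Y, hXY⟩ := hmem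
        rw [heq] at hXY
        have hrel : ((a ^ 2 + y ^ 2 * (d : ℤ) : ℤ) : ℝ)
            + ((2 * a * y : ℤ) : ℝ) * Real.sqrt d
            = ((4 * X : ℤ) : ℝ) + ((4 * Y : ℤ) : ℝ) * Real.sqrt d := by
          push_cast
          linear_combination 4 * hXY - (y : ℝ) ^ 2 * hsq
        have h2ay := (repr_unique hirr hrel).2
        -- a*y = 2*Y with a,y odd : contradiction
        have hodd : Odd (a * y) := by
          rw [hao, hB]
          exact ⟨2 * A * B + A + B, by ring⟩
        have heven : Even (a * y) := ⟨Y, by linarith⟩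
        exact (Int.not_odd_iff_even.mpr heven) hodd
      · subst h3
        exact Or.inr rfl
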